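/- For all ξ, η ∈ ℝ² and α ∈ (0,1), |ξ|^α ≤ max(|ξ−η|,|η|)^α + α·min(|ξ−η|,|η|)^α. -/

import Mathlib

/-! By the triangle inequality |ξ| ≤ M + m with M = max(|ξ-η|, |η|) and m = min(|ξ-η|, |η|).
Scaling by M reduces (M + m)^α ≤ M^α + α m^α to (1 + t)^α ≤ 1 + α t^α for t = m / M ∈ [0, 1],
which is Bernoulli's inequality (1 + t)^α ≤ 1 + α t followed by t ≤ t^α. -/

open Real

lemma one_add_rpow_le_one_add_mul_rpow {t α : ℝ} (ht0 : 0 ≤ t) (ht1 : t ≤ 1)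
    (hα0 : 0 ≤ α) (hα1 : α ≤ 1) : (1 + t) ^ α ≤ 1 + α * t ^ α :=
  calc (1 + t) ^ α ≤ 1 + α * t := rpow_one_add_le_one_add_mul_self (by linarith) hα0 hα1
    _ ≤ 1 + α * t ^ α := by gcongr; exact self_le_rpow_of_le_one ht0 ht1 hα1

lemma add_rpow_le_rpow_add_mul_rpow {M m α : ℝ} (hm : 0 ≤ m) (hmM : m ≤ M)
    (hα0 : 0 ≤ α) (hα1 : α ≤ 1) : (M + m) ^ α ≤ M ^ α + α * m ^ α := by
  obtain rfl | hM := (hm.trans hmM).eq_or_lt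
  · obtain rfl : m = 0 := le_antisymm hmM hm
    simpa using mul_nonneg hα0 (rpow_nonneg le_rfl α)
  have ht0 : 0 ≤ m / M := div_nonneg hm hM.le
  calc (M + m) ^ α = M ^ α * (1 + m / M) ^ α := by
        rw [← mul_rpow hM.le (by positivity), mul_add, mul_one, mul_div_cancel₀ m hM.ne']
    _ ≤ M ^ α * (1 + α * (m / M) ^ α) := by
        gcongr
        exact one_add_rpow_le_one_add_mul_rpow ht0 ((div_le_one hM).mpr hmM) hα0 hα1
    _ = M ^ α + α * m ^ α := by
        rw [mul_add, mul_one, mul_left_comm, ← mul_rpow hM.le ht0, mul_div_cancel₀ m hM.ne']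

theorem abs_rpow_le_max_add_min
    (ξ η : EuclideanSpace ℝ (Fin 2)) (α : ℝ) (hα0 : 0 < α) (hα1 : α < 1) :
    ‖ξ‖ ^ α ≤ max ‖ξ - η‖ ‖η‖ ^ α + α * min ‖ξ - η‖ ‖η‖ ^ α :=
  calc ‖ξ‖ ^ α ≤ (max ‖ξ - η‖ ‖η‖ + min ‖ξ - η‖ ‖η‖) ^ α := by
        rw [max_add_min]
        exact rpow_le_rpow (norm_nonneg _) (norm_le_norm_sub_add ξ η) hα0.le
    _ ≤ max ‖ξ - η‖ ‖η‖ ^ α + α * min ‖ξ - η‖ ‖η‖ ^ α :=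
        add_rpow_le_rpow_add_mul_rpow (le_min (norm_nonneg _) (norm_nonneg _)) min_le_max
          hα0.le hα1.le
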